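/- arXiv:2604.16874 — 9 statements merged into one kernel-verified Lean document; each statement's English description precedes it below -/
import Mathlib

section
/- If G is a grill of a Boolean algebra B and F is a filter with F ⊆ G, then there exists an ultrafilter U of B with F ⊆ U ⊆ G. -/
variable {α : Type*} [BooleanAlgebra α]

/-- `F` supports `G`: every element of `G` has a lower bound in `F`. -/
def Supports (F G : Set α) : Prop := ∀ g ∈ G, ∃ f ∈ F, f ≤ g

/-- `F + G = { f ⊔ g : f ∈ F, g ∈ G }`. -/
def setSup (F G : Set α) : Set α := {x | ∃ f ∈ F, ∃ g ∈ G, x = f ⊔ g}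

/-- Ultracontact: axioms (K0)-(K4). -/
def IsUC (K : Set (Set α)) : Prop :=
  (∅ : Set α) ∉ K ∧
  (∀ F : Set α, (⊥ : α) ∈ F → F ∉ K) ∧
  (∀ x : α, x ≠ ⊥ → ({x} : Set α) ∈ K) ∧
  (∀ F G : Set α, Supports F G → G ≠ ∅ → F ∈ K → G ∈ K) ∧
  (∀ F G : Set α, setSup F G ∈ K → F ∈ K ∨ G ∈ K)
/-- Grill: (Gr0)-(Gr2). -/
def IsGrill (G : Set α) : Prop :=
  (⊥ : α) ∉ G ∧ (∀ a b : α, a ∈ G → a ≤ b → b ∈ G) ∧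
    ∀ a b : α, a ⊔ b ∈ G → a ∈ G ∨ b ∈ G
def IsFilter' (F : Set α) : Prop :=
  (⊤ : α) ∈ F ∧ (∀ a b : α, a ∈ F → a ≤ b → b ∈ F) ∧
    ∀ a b : α, a ∈ F → b ∈ F → a ⊓ b ∈ F

def IsProperFilter (F : Set α) : Prop := IsFilter' F ∧ (⊥ : α) ∉ F

/-- An ultrafilter is a maximal proper filter. -/
def IsUltrafilter' (F : Set α) : Prop :=
  IsProperFilter F ∧ ∀ F' : Set α, IsProperFilter F' → F ⊆ F' → F' = F

theorem grill_lemma (G F : Set α) (hG : IsGrill G) (hF : IsFilter' F)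
    (hFG : F ⊆ G) : ∃ U : Set α, IsUltrafilter' U ∧ F ⊆ U ∧ U ⊆ G := by
  classical
  obtain ⟨hG0, hGup, hGsup⟩ := hG
  obtain ⟨hFtop, hFup, hFinf⟩ := hF
  set S : Set (Set α) := {F' | IsFilter' F' ∧ F ⊆ F' ∧ F' ⊆ G} with hS
  have hFS : F ∈ S := ⟨⟨hFtop, hFup, hFinf⟩, subset_rfl, hFG⟩
  obtain ⟨U, hFU, hUmax⟩ := zorn_subset_nonempty S (fun c hcS hchain hne => by
    obtain ⟨s0, hs0⟩ := hne
    refine ⟨⋃₀ c, ⟨⟨?_, ?_, ?_⟩, ?_, ?_⟩, fun s hs => Set.subset_sUnion_of_mem hs⟩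
    · exact ⟨s0, hs0, (hcS hs0).1.1⟩
    · rintro a b ⟨s, hs, ha⟩ hab
      exact ⟨s, hs, (hcS hs).1.2.1 a b ha hab⟩
    · rintro a b ⟨s, hs, ha⟩ ⟨t, ht, hb⟩
      rcases hchain.total hs ht with h | h
      · exact ⟨t, ht, (hcS ht).1.2.2 a b (h ha) hb⟩
      · exact ⟨s, hs, (hcS hs).1.2.2 a b ha (h hb)⟩
    · exact ((hcS hs0).2.1).trans (Set.subset_sUnion_of_mem hs0)
    · rintro x ⟨s, hs, hx⟩
      exact (hcS hs).2.2 hx) F hFS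
  have hUS := hUmax.prop
  obtain ⟨⟨hUtop, hUup, hUinf⟩, hFU', hUG⟩ := hUS
  have hUbot : (⊥ : α) ∉ U := fun h => hG0 (hUG h)
  have key : ∀ a : α, (∀ f ∈ U, f ⊓ a ∈ G) → a ∈ U := by
    intro a ha
    set V : Set α := {x | ∃ f ∈ U, f ⊓ a ≤ x} with hV
    have hVS : V ∈ S := by
      refine ⟨⟨⟨⊤, hUtop, le_top⟩, ?_, ?_⟩, ?_, ?_⟩
      · rintro x y ⟨f, hf, hfx⟩ hxy
        exact ⟨f, hf, hfx.trans hxy⟩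
      · rintro x y ⟨f, hf, hfx⟩ ⟨g, hg, hgy⟩
        refine ⟨f ⊓ g, hUinf f g hf hg, ?_⟩
        calc f ⊓ g ⊓ a ≤ (f ⊓ a) ⊓ (g ⊓ a) := by
              simp only [le_inf_iff, inf_le_right, and_true]
              exact ⟨inf_le_left.trans inf_le_left, inf_le_left.trans inf_le_right⟩
          _ ≤ x ⊓ y := inf_le_inf hfx hgy
      · intro x hx
        exact ⟨x, hFU' hx, inf_le_left⟩
      · rintro x ⟨f, hf, hfx⟩
        exact hGup _ _ (ha f hf) hfx
    have hUV : U ⊆ V := fun x hx => ⟨x, hx, inf_le_left⟩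
    have hVU : V = U := le_antisymm (hUmax.2 hVS hUV) hUV
    have haV : a ∈ V := ⟨⊤, hUtop, by simp⟩
    rwa [hVU] at haV
  have hcompl : ∀ a : α, a ∈ U ∨ aᶜ ∈ U := by
    intro a
    by_cases h1 : ∀ f ∈ U, f ⊓ a ∈ G
    · exact Or.inl (key a h1)
    by_cases h2 : ∀ f ∈ U, f ⊓ aᶜ ∈ G
    · exact Or.inr (key aᶜ h2)
    push_neg at h1 h2
    obtain ⟨f, hf, hf1⟩ := h1
    obtain ⟨g, hg, hg1⟩ := h2
    have hfg : f ⊓ g ∈ U := hUinf f g hf hg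
    have hmem : (f ⊓ g ⊓ a) ⊔ (f ⊓ g ⊓ aᶜ) ∈ G := by
      have heq : (f ⊓ g ⊓ a) ⊔ (f ⊓ g ⊓ aᶜ) = f ⊓ g := by
        rw [← inf_sup_left]; simp
      rw [heq]; exact hUG hfg
    rcases hGsup _ _ hmem with h | h
    · exact absurd (hGup _ _ h (inf_le_inf inf_le_left le_rfl)) hf1
    · exact absurd (hGup _ _ h (inf_le_inf inf_le_right le_rfl)) hg1
  refine ⟨U, ⟨⟨⟨hUtop, hUup, hUinf⟩, hUbot⟩, ?_⟩, hFU', hUG⟩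
  rintro F' ⟨⟨_, _, hF'inf⟩, hF'bot⟩ hUF'
  refine Set.Subset.antisymm (fun x hx => ?_) hUF'
  rcases hcompl x with h | h
  · exact h
  · exact absurd (by simpa using hF'inf x xᶜ hx (hUF' h)) hF'bot
end

section
/- The grills of a Boolean algebra B are exactly the meet-prime elements of the complete lattice of stacks (upward closed subsets) of B ordered by inclusion, where meet is intersection; that is, a stack G ≠ B with 0 ∉ G such that for all stacks U, V: U ∩ V ⊆ G implies U ⊆ G or V ⊆ G, precisely when G is a grill. -/
variable {α : Type*} [BooleanAlgebra α]

def IsStack (U : Set α) : Prop := ∀ a b : α, a ∈ U → a ≤ b → b ∈ U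

theorem grill_iff_meet_prime_stack (G : Set α) (hG : IsStack G) :
    IsGrill G ↔
      (G ≠ Set.univ ∧ ∀ U V : Set α, IsStack U → IsStack V →
        U ∩ V ⊆ G → U ⊆ G ∨ V ⊆ G) := by
  constructor
  · rintro ⟨h0, hup, hsup⟩
    refine ⟨fun h => h0 (h ▸ Set.mem_univ _), fun U V hU hV hUV => ?_⟩
    by_contra hc
    push_neg at hc
    obtain ⟨hnU, hnV⟩ := hc
    obtain ⟨u, hu, huG⟩ := Set.not_subset.mp hnU
    obtain ⟨v, hv, hvG⟩ := Set.not_subset.mp hnV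
    have : u ⊔ v ∈ G := hUV ⟨hU u _ hu le_sup_left, hV v _ hv le_sup_right⟩
    rcases hsup u v this with h | h
    · exact huG h
    · exact hvG h
  · rintro ⟨hne, hp⟩
    refine ⟨fun hb => hne ?_, hG, fun a b hab => ?_⟩
    · ext x; simp only [Set.mem_univ, iff_true]; exact hG ⊥ x hb bot_le
    · have := hp {x | a ≤ x} {x | b ≤ x}
        (fun p q hp hpq => le_trans hp hpq)
        (fun p q hp hpq => le_trans hp hpq)
        (fun x ⟨h1, h2⟩ => hG (a ⊔ b) x hab (sup_le h1 h2))
      rcases this with h | h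
      · exact Or.inl (h le_rfl)
      · exact Or.inr (h le_rfl)
end

section
/- The quotient of the powerset of a Boolean algebra B by the similarity relation ∼, ordered by the support relation ⪯, is a lattice in which the join of [F] and [G] is [F + G] and the meet is [F ∪ G]. -/
variable {α : Type*} [BooleanAlgebra α]

/-- The quotient of `2^B` by similarity, ordered by support, is a lattice:
`[F + G]` is the least upper bound of `[F]` and `[G]`, and `[F ∪ G]` is their
greatest lower bound (with respect to the order induced by `Supports`). -/
theorem quotient_support_lattice (F G : Set α) :
    (Supports F (setSup F G) ∧ Supports G (setSup F G) ∧
      ∀ H : Set α, Supports F H → Supports G H → Supports (setSup F G) H) ∧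
    (Supports (F ∪ G) F ∧ Supports (F ∪ G) G ∧
      ∀ H : Set α, Supports H F → Supports H G → Supports H (F ∪ G)) := by
  refine ⟨⟨?_, ?_, ?_⟩, ?_, ?_, ?_⟩
  · rintro x ⟨f, hf, g, hg, rfl⟩; exact ⟨f, hf, le_sup_left⟩
  · rintro x ⟨f, hf, g, hg, rfl⟩; exact ⟨g, hg, le_sup_right⟩
  · intro H hF hG h hh
    obtain ⟨f, hf, hfh⟩ := hF h hh
    obtain ⟨g, hg, hgh⟩ := hG h hh
    exact ⟨f ⊔ g, ⟨f, hf, g, hg, rfl⟩, sup_le hfh hgh⟩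
  · intro f hf; exact ⟨f, Or.inl hf, le_rfl⟩
  · intro g hg; exact ⟨g, Or.inr hg, le_rfl⟩
  · intro H hF hG x hx
    cases hx with
    | inl h => exact hF x h
    | inr h => exact hG x h
end

section
/- Let F be a nonempty family of ultracontacts on a Boolean algebra B. Then the set K = { F ∈ 2^B, F ≠ ∅ : for all nonempty G₁,…,Gₙ ⊆ B, if F ⪯ G₁ + … + Gₙ then some Gᵢ ∈ ⋂F } is an ultracontact, and it is the greatest ultracontact contained in ⋂F (i.e., the infimum of F in the lattice of ultracontacts). -/
variable {α : Type*} [BooleanAlgebra α]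

/-- `G₁ + ⋯ + Gₙ = { g₁ ⊔ ⋯ ⊔ gₙ : gᵢ ∈ Gᵢ }` for a finite family of sets. -/
def famSum {n : ℕ} (G : Fin n → Set α) : Set α :=
  {x | ∃ g : Fin n → α, (∀ i, g i ∈ G i) ∧ x = Finset.univ.sup g}
/-- The candidate infimum of a family of ultracontacts. -/
def ucInf (ℱ : Set (Set (Set α))) : Set (Set α) :=
  {F | F ≠ ∅ ∧ ∀ n : ℕ, 0 < n → ∀ G : Fin n → Set α, (∀ i, G i ≠ ∅) →
    Supports F (famSum G) → ∃ i, G i ∈ ⋂₀ ℱ}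

lemma sup_univ_succ' {n : ℕ} (h : Fin (n+1) → α) :
    Finset.univ.sup h = h 0 ⊔ Finset.univ.sup (h ∘ Fin.succ) := by
  rw [Fin.univ_succ, Finset.sup_cons, Finset.sup_map]
  rfl

lemma sup_univ_append' {m n : ℕ} (a : Fin m → α) (b : Fin n → α) :
    Finset.univ.sup (Fin.append a b) = Finset.univ.sup a ⊔ Finset.univ.sup b := by
  apply le_antisymm
  · refine Finset.sup_le fun i _ => ?_
    refine Fin.addCases (fun i => ?_) (fun i => ?_) i
    · rw [Fin.append_left]; exact le_sup_of_le_left (Finset.le_sup (Finset.mem_univ _))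
    · rw [Fin.append_right]; exact le_sup_of_le_right (Finset.le_sup (Finset.mem_univ _))
  · refine sup_le (Finset.sup_le fun i _ => ?_) (Finset.sup_le fun i _ => ?_)
    · have := Finset.le_sup (f := Fin.append a b) (Finset.mem_univ (Fin.castAdd n i))
      rwa [Fin.append_left] at this
    · have := Finset.le_sup (f := Fin.append a b) (Finset.mem_univ (Fin.natAdd m i))
      rwa [Fin.append_right] at this

lemma famSum_zero (G : Fin 0 → Set α) : famSum G = {(⊥ : α)} := by
  ext x
  simp only [famSum, Set.mem_setOf_eq, Set.mem_singleton_iff]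
  constructor
  · rintro ⟨g, -, rfl⟩; simp
  · rintro rfl; exact ⟨Fin.elim0, fun i => i.elim0, by simp⟩

lemma famSum_succ {n : ℕ} (G : Fin (n+1) → Set α) :
    famSum G = setSup (G 0) (famSum (G ∘ Fin.succ)) := by
  ext x
  constructor
  · rintro ⟨g, hg, rfl⟩
    exact ⟨g 0, hg 0, Finset.univ.sup (g ∘ Fin.succ), ⟨g ∘ Fin.succ, fun i => hg i.succ, rfl⟩,
      sup_univ_succ' g⟩
  · rintro ⟨f, hf, y, ⟨g', hg', rfl⟩, rfl⟩
    refine ⟨Fin.cons f g', fun i => ?_, ?_⟩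
    · refine Fin.cases ?_ (fun j => ?_) i
      · simpa using hf
      · simpa using hg' j
    · have hcomp : (Fin.cons f g' : Fin (n+1) → α) ∘ Fin.succ = g' := by
        funext j; simp
      rw [sup_univ_succ' (Fin.cons f g'), Fin.cons_zero, hcomp]

lemma famSum_append {m k : ℕ} (G : Fin m → Set α) (H : Fin k → Set α) :
    famSum (Fin.append G H) = setSup (famSum G) (famSum H) := by
  ext x
  constructor
  · rintro ⟨g, hg, rfl⟩
    set a : Fin m → α := fun i => g (Fin.castAdd k i) with ha
    set b : Fin k → α := fun i => g (Fin.natAdd m i) with hb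
    have hgab : g = Fin.append a b := by
      funext i
      refine Fin.addCases (fun j => ?_) (fun j => ?_) i
      · rw [Fin.append_left]
      · rw [Fin.append_right]
    refine ⟨Finset.univ.sup a, ⟨a, fun i => ?_, rfl⟩,
            Finset.univ.sup b, ⟨b, fun i => ?_, rfl⟩, ?_⟩
    · have := hg (Fin.castAdd k i); rwa [Fin.append_left] at this
    · have := hg (Fin.natAdd m i); rwa [Fin.append_right] at this
    · rw [hgab, sup_univ_append']
  · rintro ⟨u, ⟨a, ha, rfl⟩, v, ⟨b, hb, rfl⟩, rfl⟩
    refine ⟨Fin.append a b, fun i => ?_, (sup_univ_append' a b).symm⟩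
    refine Fin.addCases (fun j => ?_) (fun j => ?_) i
    · rw [Fin.append_left, Fin.append_left]; exact ha j
    · rw [Fin.append_right, Fin.append_right]; exact hb j

lemma uc_split {K' : Set (Set α)} (hK' : IsUC K') :
    ∀ {n : ℕ} (G : Fin n → Set α), famSum G ∈ K' → ∃ i, G i ∈ K' := by
  intro n
  induction n with
  | zero =>
    intro G hG
    rw [famSum_zero] at hG
    exact absurd hG (hK'.2.1 _ rfl)
  | succ n ih =>
    intro G hG
    rw [famSum_succ] at hG
    rcases hK'.2.2.2.2 _ _ hG with h | h
    · exact ⟨0, h⟩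
    · obtain ⟨i, hi⟩ := ih _ h
      exact ⟨i.succ, hi⟩

lemma descent (x : α) (hx : x ≠ ⊥) :
    ∀ {n : ℕ} (G : Fin n → Set α), (∀ i, G i ≠ ∅) → (∀ s ∈ famSum G, x ≤ s) →
      ∃ i, ∃ y : α, y ≠ ⊥ ∧ ∀ g ∈ G i, y ≤ g := by
  intro n
  induction n with
  | zero =>
    intro G _ hle
    have : x ≤ ⊥ := hle ⊥ (by rw [famSum_zero]; rfl)
    exact absurd (le_bot_iff.mp this) hx
  | succ n ih =>
    intro G hGne hle
    by_cases hcase : ∃ y : α, y ≠ ⊥ ∧ ∀ g ∈ G 0, y ≤ g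
    · exact ⟨0, hcase⟩
    · push_neg at hcase
      have hxle : ∀ s ∈ famSum (G ∘ Fin.succ), x ≤ s := by
        intro s hs
        have hlb : ∀ g₀ ∈ G 0, x ⊓ sᶜ ≤ g₀ := by
          intro g₀ hg₀
          have hmem : g₀ ⊔ s ∈ famSum G := by
            rw [famSum_succ]; exact ⟨g₀, hg₀, s, hs, rfl⟩
          have hxs : x ≤ g₀ ⊔ s := hle _ hmem
          calc x ⊓ sᶜ ≤ (g₀ ⊔ s) ⊓ sᶜ := inf_le_inf_right _ hxs
            _ ≤ g₀ := by
              rw [inf_comm, inf_sup_left]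
              simp
        have hbot : x ⊓ sᶜ = ⊥ := by
          by_contra hb
          obtain ⟨g, hg, hgn⟩ := hcase (x ⊓ sᶜ) hb
          exact hgn (hlb g hg)
        have : x \ s = ⊥ := by rwa [sdiff_eq]
        exact sdiff_eq_bot_iff.mp this
      obtain ⟨i, y, hy, hylb⟩ := ih (G ∘ Fin.succ) (fun i => hGne i.succ) hxle
      exact ⟨i.succ, y, hy, hylb⟩

theorem ucInf_is_infimum (ℱ : Set (Set (Set α))) (hne : ℱ.Nonempty)
    (hUC : ∀ K ∈ ℱ, IsUC K) :
    IsUC (ucInf ℱ) ∧ ucInf ℱ ⊆ ⋂₀ ℱ ∧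
      ∀ K' : Set (Set α), IsUC K' → K' ⊆ ⋂₀ ℱ → K' ⊆ ucInf ℱ := by
  refine ⟨⟨?_, ?_, ?_, ?_, ?_⟩, ?_, ?_⟩
  · -- K0
    intro h
    exact h.1 rfl
  · -- K1
    intro F hbot hF
    obtain ⟨K₀, hK₀⟩ := hne
    obtain ⟨i, hi⟩ := hF.2 1 one_pos (fun _ => {⊥}) (fun _ => Set.singleton_ne_empty ⊥)
      (fun s _ => ⟨⊥, hbot, bot_le⟩)
    exact (hUC K₀ hK₀).2.1 {⊥} rfl (hi K₀ hK₀)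
  · -- K2
    intro x hx
    refine ⟨Set.singleton_ne_empty x, fun n hn G hGne hsup => ?_⟩
    have hxle : ∀ s ∈ famSum G, x ≤ s := by
      intro s hs
      obtain ⟨f, hf, hfle⟩ := hsup s hs
      rw [Set.mem_singleton_iff] at hf
      subst hf; exact hfle
    obtain ⟨i, y, hy, hylb⟩ := descent x hx G hGne hxle
    refine ⟨i, fun K hK => ?_⟩
    have UC := hUC K hK
    exact UC.2.2.2.1 {y} (G i) (fun g hg => ⟨y, rfl, hylb g hg⟩) (hGne i) (UC.2.2.1 y hy)
  · -- K3
    intro F G hsupp hGne hF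
    refine ⟨hGne, fun n hn H hHne hsup => hF.2 n hn H hHne ?_⟩
    intro s hs
    obtain ⟨g, hg, hgle⟩ := hsup s hs
    obtain ⟨f, hf, hfle⟩ := hsupp g hg
    exact ⟨f, hf, hfle.trans hgle⟩
  · -- K4
    intro F G hFG
    by_contra hcon
    push_neg at hcon
    obtain ⟨hF, hG⟩ := hcon
    obtain ⟨z, f₀, hf₀, g₀, hg₀, -⟩ := Set.nonempty_iff_ne_empty.mpr hFG.1
    have hFne : F ≠ ∅ := Set.nonempty_iff_ne_empty.mp ⟨f₀, hf₀⟩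
    have hGne : G ≠ ∅ := Set.nonempty_iff_ne_empty.mp ⟨g₀, hg₀⟩
    simp only [ucInf, Set.mem_setOf_eq, not_and] at hF hG
    have hF' := hF hFne
    have hG' := hG hGne
    push_neg at hF' hG'
    obtain ⟨m, hm, G₁, hG₁ne, hG₁sup, hG₁not⟩ := hF'
    obtain ⟨k, hk, G₂, hG₂ne, hG₂sup, hG₂not⟩ := hG'
    set P : Fin (m + k) → Set α := Fin.append G₁ G₂ with hP
    have hPne : ∀ i, P i ≠ ∅ := by
      intro i
      refine Fin.addCases (fun j => ?_) (fun j => ?_) i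
      · rw [hP, Fin.append_left]; exact Set.nonempty_iff_ne_empty.mp (hG₁ne j)
      · rw [hP, Fin.append_right]; exact Set.nonempty_iff_ne_empty.mp (hG₂ne j)
    have hPsup : Supports (setSup F G) (famSum P) := by
      intro s hs
      rw [hP, famSum_append] at hs
      obtain ⟨u, hu, v, hv, rfl⟩ := hs
      obtain ⟨f, hf, hfle⟩ := hG₁sup u hu
      obtain ⟨g, hg, hgle⟩ := hG₂sup v hv
      exact ⟨f ⊔ g, ⟨f, hf, g, hg, rfl⟩, sup_le_sup hfle hgle⟩
    obtain ⟨i, hi⟩ := hFG.2 (m + k) (by omega) P hPne hPsup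
    refine Fin.addCases (motive := fun i => P i ∈ ⋂₀ ℱ → False)
      (fun j hj => hG₁not j ?_) (fun j hj => hG₂not j ?_) i hi
    · rwa [hP, Fin.append_left] at hj
    · rwa [hP, Fin.append_right] at hj
  · -- subset of the intersection
    intro F hF K hK
    obtain ⟨i, hi⟩ := hF.2 1 one_pos (fun _ => F) (fun _ => hF.1)
      (by rintro s ⟨g, hg, rfl⟩; exact ⟨g 0, hg 0, Finset.le_sup (Finset.mem_univ 0)⟩)
    exact hi K hK
  · -- greatest such
    intro K' hK' hsub F hF
    have hFne : F ≠ ∅ := fun h => hK'.1 (h ▸ hF)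
    refine ⟨hFne, fun n hn G hGne hsup => ?_⟩
    have hpick : ∀ i, ∃ x, x ∈ G i := fun i => Set.nonempty_iff_ne_empty.mpr (hGne i)
    have hfs_ne : famSum G ≠ ∅ := by
      refine Set.nonempty_iff_ne_empty.mp ⟨Finset.univ.sup (fun i => (hpick i).choose),
        fun i => (hpick i).choose, fun i => (hpick i).choose_spec, rfl⟩
    have hmem : famSum G ∈ K' := hK'.2.2.2.1 F (famSum G) hsup hfs_ne hF
    obtain ⟨i, hi⟩ := uc_split hK' G hmem
    exact ⟨i, hsub hi⟩
end

section
/- If C is a chain of ultracontacts on a Boolean algebra B under inclusion, then ⋂C is an ultracontact on B. -/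
variable {α : Type*} [BooleanAlgebra α]

theorem chain_inter_UC (C : Set (Set (Set α))) (hchain : IsChain (· ⊆ ·) C)
    (hne : C.Nonempty) (hUC : ∀ K ∈ C, IsUC K) : IsUC (⋂₀ C) := by
  obtain ⟨K₀, hK₀⟩ := hne
  refine ⟨?_, ?_, ?_, ?_, ?_⟩
  · intro h
    exact (hUC K₀ hK₀).1 (Set.mem_sInter.mp h K₀ hK₀)
  · intro F hF h
    exact (hUC K₀ hK₀).2.1 F hF (Set.mem_sInter.mp h K₀ hK₀)
  · intro x hx
    exact Set.mem_sInter.mpr fun K hK => (hUC K hK).2.2.1 x hx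
  · intro F G hsup hGne hF
    exact Set.mem_sInter.mpr fun K hK =>
      (hUC K hK).2.2.2.1 F G hsup hGne (Set.mem_sInter.mp hF K hK)
  · intro F G h
    by_contra hc
    push_neg at hc
    obtain ⟨hF, hG⟩ := hc
    rw [Set.mem_sInter] at hF hG
    push_neg at hF hG
    obtain ⟨K₁, hK₁, hF₁⟩ := hF
    obtain ⟨K₂, hK₂, hG₂⟩ := hG
    rcases hchain.total hK₁ hK₂ with h12 | h21
    · rcases (hUC K₁ hK₁).2.2.2.2 F G (Set.mem_sInter.mp h K₁ hK₁) with hf | hg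
      · exact hF₁ hf
      · exact hG₂ (h12 hg)
    · rcases (hUC K₂ hK₂).2.2.2.2 F G (Set.mem_sInter.mp h K₂ hK₂) with hf | hg
      · exact hF₁ (h21 hf)
      · exact hG₂ hg
end

section
/- The complete lattice of ultracontacts on a Boolean algebra B satisfies the infinite meet distributive law: K ∨ ⋀_{i∈I} K_i = ⋀_{i∈I} (K ∨ K_i), where joins are unions; hence the lattice of ultracontacts is a complete co-Heyting algebra. -/
variable {α : Type*} [BooleanAlgebra α]

lemma sup_univ_cons {n : ℕ} (x : α) (g : Fin n → α) :
    Finset.univ.sup (Fin.cons x g) = x ⊔ Finset.univ.sup g := by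
  simp [Fin.univ_succ, Finset.sup_map, Function.comp]

lemma famSum_nonempty {n : ℕ} {G : Fin n → Set α} (hG : ∀ i, G i ≠ ∅) :
    famSum G ≠ ∅ := by
  have hne : ∀ i, (G i).Nonempty := fun i => Set.nonempty_iff_ne_empty.2 (hG i)
  choose g hg using hne
  intro h
  have : Finset.univ.sup g ∈ famSum G := ⟨g, hg, rfl⟩
  rw [h] at this; exact this

/-- If a finite sum of nonempty sets is in an ultracontact, one of them is. -/
lemma famSum_mem {K : Set (Set α)} (hK : IsUC K) :
    ∀ n (G : Fin n → Set α), (∀ i, G i ≠ ∅) → famSum G ∈ K → ∃ i, G i ∈ K := by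
  intro n
  induction n with
  | zero =>
    intro G _ hmem
    exfalso
    exact hK.2.1 (famSum G) ⟨(fun i => i.elim0), fun i => i.elim0, by simp⟩ hmem
  | succ n ih =>
    intro G hGne hmem
    have hsupp : Supports (famSum G) (setSup (G 0) (famSum fun i => G i.succ)) := by
      rintro x ⟨g0, hg0, a, ⟨g', hg', rfl⟩, rfl⟩
      exact ⟨Finset.univ.sup (Fin.cons g0 g'),
        ⟨Fin.cons g0 g', fun i => Fin.cases hg0 hg' i, rfl⟩,
        le_of_eq (sup_univ_cons g0 g')⟩
    have hne : setSup (G 0) (famSum fun i => G i.succ) ≠ ∅ := by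
      have h1 : (G 0).Nonempty := Set.nonempty_iff_ne_empty.2 (hGne 0)
      have h2 : (famSum fun i => G i.succ).Nonempty :=
        Set.nonempty_iff_ne_empty.2 (famSum_nonempty fun i => hGne i.succ)
      obtain ⟨g0, hg0⟩ := h1; obtain ⟨a, ha⟩ := h2
      exact Set.nonempty_iff_ne_empty.1 ⟨g0 ⊔ a, g0, hg0, a, ha, rfl⟩
    have hmem' : setSup (G 0) (famSum fun i => G i.succ) ∈ K :=
      hK.2.2.2.1 _ _ hsupp hne hmem
    rcases hK.2.2.2.2 _ _ hmem' with h | h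
    · exact ⟨0, h⟩
    · obtain ⟨i, hi⟩ := ih (fun i => G i.succ) (fun i => hGne i.succ) h
      exact ⟨i.succ, hi⟩

theorem uc_inf_distrib {I : Type*} [Nonempty I] (K : Set (Set α))
    (Ks : I → Set (Set α)) (hK : IsUC K) (hKs : ∀ i, IsUC (Ks i)) :
    K ∪ ucInf (Set.range Ks) = ucInf (Set.range fun i => K ∪ Ks i) := by
  ext F
  constructor
  · rintro (hF | ⟨hFne, hall⟩)
    · refine ⟨fun h => hK.1 (h ▸ hF), fun n hn G hGne hsupp => ?_⟩
      have hfs : famSum G ∈ K :=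
        hK.2.2.2.1 F (famSum G) hsupp (famSum_nonempty hGne) hF
      obtain ⟨i, hi⟩ := famSum_mem hK n G hGne hfs
      refine ⟨i, ?_⟩
      rintro S ⟨j, rfl⟩
      exact Or.inl hi
    · refine ⟨hFne, fun n hn G hGne hsupp => ?_⟩
      obtain ⟨i, hi⟩ := hall n hn G hGne hsupp
      refine ⟨i, ?_⟩
      rintro S ⟨j, rfl⟩
      exact Or.inr (hi (Ks j) ⟨j, rfl⟩)
  · rintro ⟨hFne, hall⟩
    by_cases hFK : F ∈ K
    · exact Or.inl hFK
    · refine Or.inr ⟨hFne, fun n hn G hGne hsupp => ?_⟩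
      by_contra hno
      push_neg at hno
      have hno' : ∀ i, ∃ j, G i ∉ Ks j := by
        intro i
        by_contra h
        push_neg at h
        exact hno i (fun S hS => by obtain ⟨j, rfl⟩ := hS; exact h j)
      -- modified decomposition P i = F ∪ G i
      set P : Fin n → Set α := fun i => F ∪ G i with hP
      have hPne : ∀ i, P i ≠ ∅ := fun i h =>
        hFne (Set.eq_empty_of_subset_empty (h ▸ Set.subset_union_left))
      have hPsupp : Supports F (famSum P) := by
        rintro x ⟨g, hg, rfl⟩
        by_cases hc : ∃ i, g i ∈ F
        · obtain ⟨i, hi⟩ := hc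
          exact ⟨g i, hi, Finset.le_sup (Finset.mem_univ i)⟩
        · push_neg at hc
          have : ∀ i, g i ∈ G i := fun i => (hg i).resolve_left (hc i)
          exact hsupp _ ⟨g, this, rfl⟩
      obtain ⟨i, hi⟩ := hall n hn P hPne hPsupp
      have hiall : ∀ j, P i ∈ K ∪ Ks j := fun j => hi (K ∪ Ks j) ⟨j, rfl⟩
      have hPF : Supports (P i) F := fun f hf => ⟨f, Or.inl hf, le_rfl⟩
      have hPG : Supports (P i) (G i) := fun g hg => ⟨g, Or.inr hg, le_rfl⟩
      obtain ⟨j, hj⟩ := hno' i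
      rcases hiall j with h | h
      · exact hFK (hK.2.2.2.1 (P i) F hPF hFne h)
      · exact hj ((hKs j).2.2.2.1 (P i) (G i) hPG (hGne i) h)
end

section
/- Let ⟨B, K⟩ be an ultracontact algebra and M ⊆ B with M ∉ K. Then K^M := K ∪ { F : ∅ ≠ F ⊆ M } is an ultracontact if and only if M is a grill. -/
variable {α : Type*} [BooleanAlgebra α]

theorem uc_extension_iff_grill (K : Set (Set α)) (M : Set α) (hK : IsUC K)
    (hM : M ∉ K) :
    IsUC (K ∪ {F : Set α | F ≠ ∅ ∧ F ⊆ M}) ↔ IsGrill M := by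
  obtain ⟨k0, k1, k2, k3, k4⟩ := hK
  set K' : Set (Set α) := K ∪ {F : Set α | F ≠ ∅ ∧ F ⊆ M} with hK'def
  constructor
  · rintro ⟨h0, h1, h2, h3, h4⟩
    -- from any superset-of-M structure, derive contradiction helper
    have hMK : ∀ S : Set α, S ∈ K → M ≠ ∅ → (∀ m ∈ M, m ∈ S) → False := by
      intro S hS hMne hsub
      exact hM (k3 S M (fun m hm => ⟨m, hsub m hm, le_rfl⟩) hMne hS)
    have hup : ∀ a b : α, a ∈ M → a ≤ b → b ∈ M := by
      intro a b ha hab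
      by_contra hb
      have hMne : M ≠ ∅ := fun h => by simp [h] at ha
      have hM' : M ∈ K' := Or.inr ⟨hMne, le_refl M⟩
      have hsup : Supports M (M ∪ {b}) := by
        rintro g (hg | hg)
        · exact ⟨g, hg, le_rfl⟩
        · simp only [Set.mem_singleton_iff] at hg
          subst hg
          exact ⟨a, ha, hab⟩
      have h5 : M ∪ {b} ∈ K' :=
        h3 M (M ∪ {b}) hsup (by
          intro h
          have : b ∈ (∅ : Set α) := h ▸ (Or.inr rfl)
          exact this) hM'
      rcases h5 with h6 | h6
      · exact hMK _ h6 hMne (fun m hm => Or.inl hm)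
      · exact hb (h6.2 (Or.inr rfl))
    refine ⟨?_, hup, ?_⟩
    · intro hbot
      exact h1 {⊥} rfl (Or.inr ⟨by simp, Set.singleton_subset_iff.mpr hbot⟩)
    · intro a b hab
      by_contra h
      push_neg at h
      obtain ⟨ha, hb⟩ := h
      have hMne : M ≠ ∅ := fun h => by simp [h] at hab
      have hss : setSup (M ∪ {a}) (M ∪ {b}) ⊆ M := by
        rintro x ⟨f, hf, g, hg, rfl⟩
        rcases hf with hf | hf
        · exact hup f (f ⊔ g) hf le_sup_left
        · rcases hg with hg | hg
          · exact hup g (f ⊔ g) hg le_sup_right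
          · simp only [Set.mem_singleton_iff] at hf hg
            subst hf; subst hg; exact hab
      have hne : setSup (M ∪ {a}) (M ∪ {b}) ≠ ∅ := by
        intro h
        have : a ⊔ b ∈ setSup (M ∪ {a}) (M ∪ {b}) :=
          ⟨a, Or.inr rfl, b, Or.inr rfl, rfl⟩
        rw [h] at this
        exact this
      have h5 : setSup (M ∪ {a}) (M ∪ {b}) ∈ K' := Or.inr ⟨hne, hss⟩
      rcases h4 _ _ h5 with h6 | h6 <;> rcases h6 with h7 | h7
      · exact hMK _ h7 hMne (fun m hm => Or.inl hm)
      · exact ha (h7.2 (Or.inr rfl))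
      · exact hMK _ h7 hMne (fun m hm => Or.inl hm)
      · exact hb (h7.2 (Or.inr rfl))
  · rintro ⟨g0, g1, g2⟩
    refine ⟨?_, ?_, ?_, ?_, ?_⟩
    · rintro (h | h)
      · exact k0 h
      · exact h.1 rfl
    · rintro F hbot (h | h)
      · exact k1 F hbot h
      · exact g0 (h.2 hbot)
    · intro x hx
      exact Or.inl (k2 x hx)
    · rintro F G hsup hGne (hF | hF)
      · exact Or.inl (k3 F G hsup hGne hF)
      · refine Or.inr ⟨hGne, fun g hg => ?_⟩
        obtain ⟨f, hf, hfg⟩ := hsup g hg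
        exact g1 f g (hF.2 hf) hfg
    · rintro F G (h | h)
      · rcases k4 F G h with hF | hG
        · exact Or.inl (Or.inl hF)
        · exact Or.inr (Or.inl hG)
      · obtain ⟨hne, hss⟩ := h
        obtain ⟨x, f, hf, g, hg, rfl⟩ := Set.nonempty_iff_ne_empty.mpr hne
        by_cases hFM : F ⊆ M
        · exact Or.inl (Or.inr ⟨fun h => by simp [h] at hf, hFM⟩)
        · refine Or.inr (Or.inr ⟨fun h => by simp [h] at hg, fun b hb => ?_⟩)
          obtain ⟨a, haF, haM⟩ := Set.not_subset.mp hFM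
          have : a ⊔ b ∈ M := hss ⟨a, haF, b, hb, rfl⟩
          rcases g2 a b this with h | h
          · exact absurd h haM
          · exact h
end

section
/- If ⟨B, K⟩ is an ultracontact algebra, then the binary relation C_K defined by x C_K y iff {x, y} ∈ K is a contact relation on B: 0 is not in contact with anything; every nonzero x satisfies x C_K x; C_K is symmetric; x C_K y and y ≤ z imply x C_K z; and x C_K (y + z) implies x C_K y or x C_K z. -/
variable {α : Type*} [BooleanAlgebra α]

theorem uc_induces_contact (K : Set (Set α)) (hK : IsUC K) :
    (∀ x : α, ({⊥, x} : Set α) ∉ K) ∧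
    (∀ x : α, x ≠ ⊥ → ({x, x} : Set α) ∈ K) ∧
    (∀ x y : α, ({x, y} : Set α) ∈ K → ({y, x} : Set α) ∈ K) ∧
    (∀ x y z : α, ({x, y} : Set α) ∈ K → y ≤ z → ({x, z} : Set α) ∈ K) ∧
    (∀ x y z : α, ({x, y ⊔ z} : Set α) ∈ K →
      ({x, y} : Set α) ∈ K ∨ ({x, z} : Set α) ∈ K) := by
  obtain ⟨h0, h1, h2, h3, h4⟩ := hK
  refine ⟨fun x => h1 _ (by simp), ?_, ?_, ?_, ?_⟩
  · intro x hx
    simpa using h2 x hx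
  · intro x y h
    rw [Set.pair_comm]; exact h
  · intro x y z h hyz
    refine h3 {x, y} {x, z} ?_ (Set.nonempty_iff_ne_empty.mp (Set.insert_nonempty _ _)) h
    intro g hg
    rcases hg with hg | hg
    · exact ⟨x, Or.inl rfl, hg.ge⟩
    · exact ⟨y, Or.inr rfl, hg ▸ hyz⟩
  · intro x y z h
    refine h4 {x, y} {x, z} ?_
    refine h3 {x, y ⊔ z} _ ?_ ?_ h
    · rintro g ⟨f, hf, g', hg', rfl⟩
      rcases hf with hf | hf
      · exact ⟨x, Or.inl rfl, by rw [hf]; exact le_sup_left⟩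
      · rcases hg' with hg' | hg'
        · exact ⟨x, Or.inl rfl, by rw [hg']; exact le_sup_right⟩
        · exact ⟨y ⊔ z, Or.inr rfl, by rw [hf, hg']⟩
    · intro he
      have : x ⊔ x ∈ setSup ({x, y} : Set α) {x, z} := ⟨x, by simp, x, by simp⟩
      rw [he] at this
      exact this
end

section
/- For any Boolean algebra B, the map K ↦ S_K = { ↑F : F ∈ K } (upward closures of members of K) is an order isomorphism between the set of ultracontacts on B and the set of stack systems on B, with inverse S ↦ K_S = { F ⊆ B : ↑F ∈ S }. -/
variable {α : Type*} [BooleanAlgebra α]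

/-- Upward closure of a subset. -/
def upClosure (F : Set α) : Set α := {y | ∃ f ∈ F, f ≤ y}

/-- Stack system: axioms (SS0)-(SS4). -/
def IsStackSystem (S : Set (Set α)) : Prop :=
  (∀ U ∈ S, IsStack U) ∧
  (∅ : Set α) ∉ S ∧
  (Set.univ : Set α) ∉ S ∧
  (∀ x : α, x ≠ ⊥ → {y : α | x ≤ y} ∈ S) ∧
  (∀ U V : Set α, IsStack U → IsStack V → U ≠ ∅ → U ⊆ V → V ∈ S → U ∈ S) ∧
  (∀ U V : Set α, IsStack U → IsStack V → U ∩ V ∈ S → U ∈ S ∨ V ∈ S)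

def SK (K : Set (Set α)) : Set (Set α) := {U | ∃ F ∈ K, U = upClosure F}

def KS (S : Set (Set α)) : Set (Set α) := {F | upClosure F ∈ S}


lemma upClosure_isStack (F : Set α) : IsStack (upClosure F) := by
  rintro a b ⟨f, hf, hfa⟩ hab; exact ⟨f, hf, hfa.trans hab⟩

lemma subset_upClosure (F : Set α) : F ⊆ upClosure F := fun x hx => ⟨x, hx, le_rfl⟩

lemma isStack_upClosure_eq {U : Set α} (h : IsStack U) : upClosure U = U := by
  apply Set.Subset.antisymm
  · rintro x ⟨u, hu, hux⟩; exact h u x hu hux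
  · exact subset_upClosure U

lemma upClosure_empty : upClosure (∅ : Set α) = ∅ := by
  ext x; simp [upClosure]

lemma upClosure_mono {F G : Set α} (h : F ⊆ G) : upClosure F ⊆ upClosure G := by
  rintro x ⟨f, hf, hfx⟩; exact ⟨f, h hf, hfx⟩

lemma supports_upClosure (F : Set α) : Supports F (upClosure F) := fun g hg => hg

lemma upClosure_supports (F : Set α) : Supports (upClosure F) F :=
  fun g hg => ⟨g, subset_upClosure F hg, le_rfl⟩

lemma uc_mem_iff_upClosure {K : Set (Set α)} (hK : IsUC K) (F : Set α) :
    F ∈ K ↔ upClosure F ∈ K := by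
  obtain ⟨h0, h1, h2, h3, h4⟩ := hK
  by_cases hF : F = ∅
  · subst hF; rw [upClosure_empty]
  constructor
  · intro h
    exact h3 F (upClosure F) (supports_upClosure F)
      (fun he => hF (Set.eq_empty_iff_forall_notMem.2
        (fun x hx => Set.eq_empty_iff_forall_notMem.1 he x (subset_upClosure F hx)))) h
  · intro h
    exact h3 (upClosure F) F (upClosure_supports F) hF h

lemma upClosure_setSup (F G : Set α) :
    upClosure (setSup F G) = upClosure F ∩ upClosure G := by
  ext x; constructor
  · rintro ⟨_, ⟨f, hf, g, hg, rfl⟩, hx⟩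
    exact ⟨⟨f, hf, (le_sup_left).trans hx⟩, ⟨g, hg, (le_sup_right).trans hx⟩⟩
  · rintro ⟨⟨f, hf, hfx⟩, ⟨g, hg, hgx⟩⟩
    exact ⟨f ⊔ g, ⟨f, hf, g, hg, rfl⟩, sup_le hfx hgx⟩

lemma setSup_of_stacks {U V : Set α} (hU : IsStack U) (hV : IsStack V) :
    setSup U V = U ∩ V := by
  ext x; constructor
  · rintro ⟨u, hu, v, hv, rfl⟩
    exact ⟨hU u _ hu le_sup_left, hV v _ hv le_sup_right⟩
  · rintro ⟨hu, hv⟩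
    exact ⟨x, hu, x, hv, (sup_idem x).symm⟩

lemma sk_isStackSystem (K : Set (Set α)) (hK : IsUC K) : IsStackSystem (SK K) := by
  obtain ⟨h0, h1, h2, h3, h4⟩ := hK
  refine ⟨?_, ?_, ?_, ?_, ?_, ?_⟩
  · rintro U ⟨F, _, rfl⟩; exact upClosure_isStack F
  · rintro ⟨F, hF, hFe⟩
    have : F = ∅ := Set.eq_empty_iff_forall_notMem.2
      (fun x hx => Set.eq_empty_iff_forall_notMem.1 hFe.symm x (subset_upClosure F hx))
    exact h0 (this ▸ hF)
  · rintro ⟨F, hF, hFu⟩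
    have : (⊥ : α) ∈ upClosure F := hFu ▸ Set.mem_univ _
    obtain ⟨f, hf, hfb⟩ := this
    exact h1 F (le_bot_iff.1 hfb ▸ hf) hF
  · intro x hx
    refine ⟨{x}, h2 x hx, ?_⟩
    ext y; simp [upClosure]
  · rintro U V hUs hVs hUne hUV ⟨F, hF, rfl⟩
    have hUK : U ∈ K := by
      refine h3 (upClosure F) U (fun g hg => ⟨g, hUV hg, le_rfl⟩) hUne
        ((uc_mem_iff_upClosure ⟨h0, h1, h2, h3, h4⟩ F).1 hF)
    exact ⟨U, hUK, (isStack_upClosure_eq hUs).symm⟩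
  · rintro U V hUs hVs ⟨F, hF, hFe⟩
    have hmem : setSup U V ∈ K := by
      rw [setSup_of_stacks hUs hVs, hFe]
      exact (uc_mem_iff_upClosure ⟨h0, h1, h2, h3, h4⟩ F).1 hF
    rcases h4 U V hmem with h | h
    · exact Or.inl ⟨U, h, (isStack_upClosure_eq hUs).symm⟩
    · exact Or.inr ⟨V, h, (isStack_upClosure_eq hVs).symm⟩

lemma ks_isUC (S : Set (Set α)) (hS : IsStackSystem S) : IsUC (KS S) := by
  obtain ⟨hst, s0, s1, s2, s3, s4⟩ := hS
  refine ⟨?_, ?_, ?_, ?_, ?_⟩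
  · intro h; rw [KS, Set.mem_setOf_eq, upClosure_empty] at h; exact s0 h
  · intro F hbot h
    have : upClosure F = Set.univ := by
      ext x; simp only [Set.mem_univ, iff_true]; exact ⟨⊥, hbot, bot_le⟩
    rw [KS, Set.mem_setOf_eq, this] at h; exact s1 h
  · intro x hx
    have : upClosure ({x} : Set α) = {y : α | x ≤ y} := by ext y; simp [upClosure]
    simpa [KS, this] using s2 x hx
  · intro F G hsup hGne hF
    have hsub : upClosure G ⊆ upClosure F := by
      rintro y ⟨g, hg, hgy⟩
      obtain ⟨f, hf, hfg⟩ := hsup g hg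
      exact ⟨f, hf, hfg.trans hgy⟩
    have hne : upClosure G ≠ ∅ := by
      obtain ⟨g, hg⟩ := Set.nonempty_iff_ne_empty.2 hGne
      exact Set.nonempty_iff_ne_empty.1 ⟨g, subset_upClosure G hg⟩
    exact s3 (upClosure G) (upClosure F) (upClosure_isStack G) (upClosure_isStack F)
      hne hsub hF
  · intro F G h
    rw [KS, Set.mem_setOf_eq, upClosure_setSup] at h
    exact s4 (upClosure F) (upClosure G) (upClosure_isStack F) (upClosure_isStack G) h

theorem uc_stack_system_order_iso :
    (∀ K : Set (Set α), IsUC K → IsStackSystem (SK K)) ∧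
    (∀ S : Set (Set α), IsStackSystem S → IsUC (KS S)) ∧
    (∀ K : Set (Set α), IsUC K → KS (SK K) = K) ∧
    (∀ S : Set (Set α), IsStackSystem S → SK (KS S) = S) ∧
    (∀ K K' : Set (Set α), IsUC K → IsUC K' → (K ⊆ K' ↔ SK K ⊆ SK K')) := by
  refine ⟨sk_isStackSystem, ks_isUC, ?_, ?_, ?_⟩
  · intro K hK
    ext F
    simp only [KS, SK, Set.mem_setOf_eq]
    constructor
    · rintro ⟨G, hG, hFG⟩
      have : upClosure F ∈ K := hFG ▸ (uc_mem_iff_upClosure hK G).1 hG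
      exact (uc_mem_iff_upClosure hK F).2 this
    · intro h; exact ⟨F, h, rfl⟩
  · intro S hS
    ext U
    simp only [SK, KS, Set.mem_setOf_eq]
    constructor
    · rintro ⟨F, hF, rfl⟩; exact hF
    · intro h
      have hst := hS.1 U h
      exact ⟨U, by rwa [isStack_upClosure_eq hst], (isStack_upClosure_eq hst).symm⟩
  · intro K K' hK hK'
    constructor
    · rintro h U ⟨F, hF, rfl⟩; exact ⟨F, h hF, rfl⟩
    · intro h F hF
      obtain ⟨G, hG, hFG⟩ := h ⟨F, hF, rfl⟩
      have : upClosure F ∈ K' := hFG ▸ (uc_mem_iff_upClosure hK' G).1 hG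
      exact (uc_mem_iff_upClosure hK' F).2 this
end
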